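/- For every closed lambda term M, the translated first-order term ⌊M⌋ is canonical; moreover, canonicity is preserved by rewriting in Φ: if t is canonical and t → u in Φ, then u is canonical. -/

import Mathlib

/-- Pure untyped λ-terms with named variables. -/
inductive Tm : Type
  | var : ℕ → Tm
  | lam : ℕ → Tm → Tm
  | app : Tm → Tm → Tm
deriving DecidableEq

namespace Tm

/-- Free variables. -/
def fv : Tm → Finset ℕ
  | var x => {x}
  | lam x M => fv M \ {x}
  | app M N => fv M ∪ fv N

/-- A term is closed when it has no free variables. -/
def Closed (M : Tm) : Prop := fv M = ∅

/-- Values: variables and abstractions. -/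
def IsValue : Tm → Prop
  | var _ => True
  | lam _ _ => True
  | app _ _ => False

/-- (Naive) substitution `M{N/x}`. -/
def subst : Tm → ℕ → Tm → Tm
  | var y, x, N => if y = x then N else var y
  | lam y P, x, N => if y = x then lam y P else lam y (subst P x N)
  | app P Q, x, N => app (subst P x N) (subst Q x N)

/-- Weak call-by-value reduction: β-redexes whose argument is a value,
closed under both application contexts, never under λ. -/
inductive Cbv : Tm → Tm → Prop
  | beta {x M V} : IsValue V → Cbv (app (lam x M) V) (subst M x V)
  | appL {M N L} : Cbv M N → Cbv (app M L) (app N L)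
  | appR {M N L} : Cbv M N → Cbv (app L M) (app L N)

/-- The subterm relation on λ-terms. -/
inductive Sub : Tm → Tm → Prop
  | refl (M) : Sub M M
  | lam {M N x} : Sub M N → Sub M (lam x N)
  | appL {M N L} : Sub M N → Sub M (app N L)
  | appR {M N L} : Sub M L → Sub M (app N L)

end Tm

/-- `M N₁ … Nₖ` (left-nested application). -/
def appList : Tm → List Tm → Tm := List.foldl Tm.app

/-- `λx₁.…λxₖ.M`. -/
def lams : List ℕ → Tm → Tm := fun xs M => xs.foldr Tm.lam M

/-- `stepsN R n a b`: `a` reduces to `b` in exactly `n` `R`-steps. -/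
def stepsN {α : Type*} (R : α → α → Prop) : ℕ → α → α → Prop
  | 0, a, b => a = b
  | n + 1, a, b => ∃ c, R a c ∧ stepsN R n c b

/-- `a` is an `R`-normal form. -/
def NormalForm {α : Type*} (R : α → α → Prop) (a : α) : Prop := ¬ ∃ b, R a b

/-- Terms of the constructor rewrite system Φ: variables, the binary function
symbol `app`, and a constructor `c_{x,M}` for each variable `x` and λ-term `M`. -/
inductive PTm : Type
  | pvar : ℕ → PTm
  | papp : PTm → PTm → PTm
  | con : ℕ → Tm → List PTm → PTm

namespace PTm

/-- The (sorted) list of free variables of a λ-term. -/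
def fvList (M : Tm) : List ℕ := (Tm.fv M).sort (· ≤ ·)

/-- The translation `⌊·⌋` from λ-terms to Φ-terms. -/
def toP : Tm → PTm
  | .var x => pvar x
  | .lam x M => con x M ((fvList (Tm.lam x M)).map pvar)
  | .app M N => papp (toP M) (toP N)

/-- Simultaneous (sequential, for closed arguments) λ-substitution `M{Nᵢ/xᵢ}`. -/
def substList (M : Tm) (xs : List ℕ) (Ns : List Tm) : Tm :=
  (xs.zip Ns).foldl (fun acc p => Tm.subst acc p.1 p.2) M

/-- The readback `⌈·⌉` from Φ-terms to λ-terms. -/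
def toL : PTm → Tm
  | pvar x => .var x
  | papp u v => .app (toL u) (toL v)
  | con x M ts =>
      substList (Tm.lam x M) (fvList (Tm.lam x M)) (ts.attach.map fun t => toL t.1)
termination_by t => sizeOf t
decreasing_by all_goals first
  | (simp_wf; have := List.sizeOf_lt_of_mem t.2; omega)
  | (simp_wf; omega)
  | simp_wf

/-- First-order substitution on Φ-terms. -/
def psubst : PTm → ℕ → PTm → PTm
  | pvar y, x, N => if y = x then N else pvar y
  | papp u v, x, N => papp (psubst u x N) (psubst v x N)
  | con y M ts, x, N => con y M (ts.attach.map fun t => psubst t.1 x N)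
termination_by t _ _ => sizeOf t
decreasing_by all_goals first
  | (simp_wf; have := List.sizeOf_lt_of_mem t.2; omega)
  | (simp_wf; omega)
  | simp_wf

/-- Simultaneous (sequential, for ground arguments) substitution on Φ-terms. -/
def psubstList (t : PTm) (xs : List ℕ) (us : List PTm) : PTm :=
  (xs.zip us).foldl (fun acc p => psubst acc p.1 p.2) t

/-- Constructor terms of Φ: ground terms built from constructors only. -/
inductive IsConT : PTm → Prop
  | con {x M ts} : (∀ t ∈ ts, IsConT t) → IsConT (con x M ts)

/-- Well-formed Φ-terms: every constructor `c_{x,M}` gets exactly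
`|FV(λx.M)|` arguments. -/
inductive WF : PTm → Prop
  | pvar (x) : WF (pvar x)
  | papp {u v} : WF u → WF v → WF (papp u v)
  | con {x M ts} : ts.length = (fvList (Tm.lam x M)).length →
      (∀ t ∈ ts, WF t) → WF (con x M ts)

/-- Canonical closed Φ-terms: constructor terms, or `app` of canonical terms. -/
inductive Canonical : PTm → Prop
  | ofCon {t} : IsConT t → Canonical t
  | papp {u v} : Canonical u → Canonical v → Canonical (papp u v)

/-- Call-by-value rewriting in Φ: the rules are
`app(c_{x,M}(x₁,…,xₙ), x) → ⌊M⌋` (with `FV(λx.M) = x₁,…,xₙ`), matched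
variables are instantiated by constructor terms, and rewriting is closed
under arbitrary contexts. -/
inductive Step : PTm → PTm → Prop
  | beta {x : ℕ} {M : Tm} {ts : List PTm} {v : PTm} :
      (∀ t ∈ ts, IsConT t) → IsConT v →
      ts.length = (fvList (Tm.lam x M)).length →
      Step (papp (con x M ts) v)
        (psubstList (toP M) (fvList (Tm.lam x M) ++ [x]) (ts ++ [v]))
  | appL {u u' v} : Step u u' → Step (papp u v) (papp u' v)
  | appR {u v v'} : Step v v' → Step (papp u v) (papp u v')
  | conArg {x M t t' l r} : Step t t' →
      Step (con x M (l ++ t :: r)) (con x M (l ++ t' :: r))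

/-- Variables occurring in a Φ-term. -/
def pvarsOf : PTm → Finset ℕ
  | pvar x => {x}
  | papp u v => pvarsOf u ∪ pvarsOf v
  | con _ _ ts => ts.attach.foldr (fun t s => pvarsOf t.1 ∪ s) ∅
termination_by t => sizeOf t
decreasing_by all_goals first
  | (simp_wf; have := List.sizeOf_lt_of_mem t.2; omega)
  | (simp_wf; omega)
  | simp_wf

/-- The subterm relation on Φ-terms. -/
inductive PSub : PTm → PTm → Prop
  | refl (t) : PSub t t
  | appL {t u v} : PSub t u → PSub t (papp u v)
  | appR {t u v} : PSub t v → PSub t (papp u v)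
  | conArg {t u x M ts} : u ∈ ts → PSub t u → PSub t (con x M ts)

end PTm


/-!
Canonicity is tracked for open terms: a term is canonical over a set `s` of variables when
it is built with `app` from constructor terms whose leaves may also be variables in `s`.
The translation `⌊M⌋` is canonical over `FV(M)`, and substituting constructor terms for
variables removes them from `s`. The contractum of a rule `app(c_{x,M}(ts), v)` substitutes
for all of `FV(λx.M) ∪ {x} ⊇ FV(M)`, so it is canonical over `∅`, i.e. canonical. Every other
step happens below an `app`, because constructor terms are normal forms.
-/

namespace PTm

inductive IsConTOver (s : Set ℕ) : PTm → Prop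
  | pvar {x} : x ∈ s → IsConTOver s (pvar x)
  | con {x M ts} : (∀ t ∈ ts, IsConTOver s t) → IsConTOver s (con x M ts)

inductive CanonicalOver (s : Set ℕ) : PTm → Prop
  | ofConTOver {t} : IsConTOver s t → CanonicalOver s t
  | papp {u v} : CanonicalOver s u → CanonicalOver s v → CanonicalOver s (papp u v)

variable {s s' : Set ℕ} {t : PTm}

theorem IsConTOver.mono (h : s ⊆ s') (ht : IsConTOver s t) : IsConTOver s' t := by
  induction ht with
  | pvar hx => exact .pvar (h hx)
  | con _ ih => exact .con ih

theorem CanonicalOver.mono (h : s ⊆ s') (ht : CanonicalOver s t) : CanonicalOver s' t := by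
  induction ht with
  | ofConTOver ht => exact .ofConTOver (ht.mono h)
  | papp _ _ ihu ihv => exact .papp ihu ihv

theorem IsConT.isConTOver (ht : IsConT t) : IsConTOver s t := by
  induction ht with
  | con _ ih => exact .con ih

theorem IsConTOver.isConT (ht : IsConTOver ∅ t) : IsConT t := by
  induction ht with
  | pvar hx => exact absurd hx (Set.notMem_empty _)
  | con _ ih => exact .con ih

theorem CanonicalOver.canonical (ht : CanonicalOver ∅ t) : Canonical t := by
  induction ht with
  | ofConTOver ht => exact .ofCon ht.isConT
  | papp _ _ ihu ihv => exact .papp ihu ihv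

theorem psubst_con (y : ℕ) (M : Tm) (ts : List PTm) (x : ℕ) (N : PTm) :
    psubst (con y M ts) x N = con y M (ts.map (psubst · x N)) := by
  rw [psubst, List.attach_map_val (f := (psubst · x N))]

theorem IsConTOver.psubst (ht : IsConTOver s t) (x : ℕ) {N : PTm} (hN : IsConT N) :
    IsConTOver (s \ {x}) (psubst t x N) := by
  induction ht with
  | @pvar y hy =>
      by_cases hyx : y = x
      · simpa [PTm.psubst, hyx] using hN.isConTOver
      · simpa [PTm.psubst, hyx] using IsConTOver.pvar (s := s \ {x}) ⟨hy, hyx⟩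
  | con _ ih =>
      rw [psubst_con]
      exact .con fun _ hu => by
        obtain ⟨w, hw, rfl⟩ := List.mem_map.1 hu
        exact ih w hw

theorem CanonicalOver.psubst (ht : CanonicalOver s t) (x : ℕ) {N : PTm} (hN : IsConT N) :
    CanonicalOver (s \ {x}) (psubst t x N) := by
  induction ht with
  | ofConTOver ht => exact .ofConTOver (ht.psubst x hN)
  | papp _ _ ihu ihv => rw [PTm.psubst]; exact .papp ihu ihv

theorem CanonicalOver.psubstList {xs : List ℕ} {us : List PTm} (hlen : xs.length ≤ us.length)
    (hus : ∀ u ∈ us, IsConT u) (ht : CanonicalOver s t) :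
    CanonicalOver (s \ {y | y ∈ xs}) (psubstList t xs us) := by
  induction xs generalizing us s t with
  | nil => simpa [PTm.psubstList] using ht
  | cons x xs ih =>
      obtain _ | ⟨u, us⟩ := us
      · simp at hlen
      have hrest := ih (Nat.le_of_succ_le_succ hlen) (fun w hw => hus w (by simp [hw]))
        (ht.psubst x (hus u (by simp)))
      have hdiff : (s \ {x}) \ {y | y ∈ xs} = s \ {y | y ∈ x :: xs} := by
        ext; simp [and_assoc]
      rwa [hdiff] at hrest

theorem mem_fvList {M : Tm} {y : ℕ} : y ∈ fvList M ↔ y ∈ Tm.fv M := by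
  simp [fvList]

theorem canonicalOver_toP (M : Tm) : CanonicalOver ↑(Tm.fv M) (toP M) := by
  induction M with
  | var x => exact .ofConTOver (.pvar (by simp [Tm.fv]))
  | lam x M _ =>
      refine .ofConTOver (.con fun t ht => ?_)
      obtain ⟨y, hy, rfl⟩ := List.mem_map.1 ht
      exact .pvar (by simpa using mem_fvList.1 hy)
  | app M N ihM ihN =>
      exact .papp (ihM.mono (by simp [Tm.fv])) (ihN.mono (by simp [Tm.fv]))

theorem canonical_toP {M : Tm} (hM : M.Closed) : Canonical (toP M) :=
  ((canonicalOver_toP M).mono (by simp [show M.fv = ∅ from hM])).canonical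

theorem fv_subset_fvList_lam_append (x : ℕ) (M : Tm) :
    (↑(Tm.fv M) : Set ℕ) ⊆ {y | y ∈ fvList (Tm.lam x M) ++ [x]} := by
  intro y hy
  by_cases hyx : y = x
  · simp [hyx]
  · simpa [mem_fvList, Tm.fv, hyx] using hy

theorem canonical_psubstList_toP {x : ℕ} {M : Tm} {ts : List PTm} {v : PTm}
    (hts : ∀ t ∈ ts, IsConT t) (hv : IsConT v) (hlen : ts.length = (fvList (Tm.lam x M)).length) :
    Canonical (psubstList (toP M) (fvList (Tm.lam x M) ++ [x]) (ts ++ [v])) := by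
  have hcan := (canonicalOver_toP M).psubstList
    (xs := fvList (Tm.lam x M) ++ [x]) (us := ts ++ [v]) (by simp [hlen]) (by
      simp only [List.mem_append, List.mem_singleton, or_imp, forall_and, forall_eq]
      exact ⟨hts, hv⟩)
  exact (hcan.mono (Set.sdiff_eq_empty.2 (fv_subset_fvList_lam_append x M)).le).canonical

theorem IsConT.normalForm (ht : IsConT t) : NormalForm Step t := by
  rintro ⟨u, hstep⟩
  induction hstep with
  | beta | appL | appR => cases ht
  | conArg _ ih =>
      cases ht with
      | con hts => exact ih (hts _ (by simp))

theorem Canonical.step {u : PTm} (ht : Canonical t) (hstep : Step t u) : Canonical u := by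
  induction hstep with
  | beta hts hv hlen => exact canonical_psubstList_toP hts hv hlen
  | appL _ ih =>
      cases ht with
      | ofCon hcon => cases hcon
      | papp hu hv => exact .papp (ih hu) hv
  | appR _ ih =>
      cases ht with
      | ofCon hcon => cases hcon
      | papp hu hv => exact .papp hu (ih hv)
  | conArg hstep =>
      cases ht with
      | ofCon hcon =>
          cases hcon with
          | con hts => exact absurd ⟨_, hstep⟩ (hts _ (by simp)).normalForm

end PTm

/-- for every closed λ-term `M` the translation `⌊M⌋` is
canonical, and canonicity of Φ-terms is preserved by Φ-rewriting. -/
theorem canonicity :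
    (∀ M : Tm, Tm.Closed M → PTm.Canonical (PTm.toP M)) ∧
      (∀ t u : PTm, PTm.WF t → PTm.Canonical t → PTm.Step t u →
        PTm.Canonical u) :=
  ⟨fun _ hM => PTm.canonical_toP hM, fun _ _ _ ht hstep => ht.step hstep⟩
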